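/- Assume the ternary representation setup. For k ≥ 1, let j be a linear combination with all coefficients in {1, −1} of k distinct columns of Q other than e^P, and let j' be the vector obtained from j by deleting its first entry. Then, for each sign, j' has at most k+1 entries of that sign. Moreover, if the first entry of j is zero, then for each sign j itself has at most k entries of that sign. -/

import Mathlib

/-!
Fix a sign `s` and put `w = s • j`, a vector in the span of the columns of `S`. Adding the unit
column `b_i` for each row `i` of the set `Z` where `w` and `e^P` differ writes `e^P` as a
combination of the columns of `S` and of `|Z|` basis columns, so `e` lies in a circuit with at
most `k + |Z| + 1` elements and looseness gives `r ≤ k + |Z| + 1`. The rows `i ≠ 0` with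
`j_i = s`, together with row `0` when `j_0 = 0`, are rows where `w` agrees with `e^P`, because
`e^P` is `1` off row `0` and `0` on it; there are at most `r - |Z| ≤ k + 1` of those.
-/

namespace LoosePaper

open Set
open scoped Matroid

variable {α β : Type*}

/-- A circuit of a matroid: a minimal dependent set. -/
def Circuit (M : Matroid α) (C : Set α) : Prop :=
  M.Dep C ∧ ∀ D, M.Dep D → D ⊆ C → D = C

/-- The rank of a matroid: the (common) cardinality of its bases. -/
noncomputable def rank (M : Matroid α) : ℕ :=
  sInf {n | ∃ B, M.IsBase B ∧ B.ncard = n}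

/-- An element is loose if every circuit containing it has size at least the rank. -/
def Loose (M : Matroid α) (e : α) : Prop :=
  e ∈ M.E ∧ ∀ C, Circuit M C → e ∈ C → rank M ≤ C.ncard

/-- An element is free if every circuit containing it is spanning. -/
def FreeElt (M : Matroid α) (e : α) : Prop :=
  e ∈ M.E ∧ ∀ C, Circuit M C → e ∈ C → M.closure C = M.E

/-- A coloop: an element contained in every base. -/
def Coloop (M : Matroid α) (e : α) : Prop :=
  e ∈ M.E ∧ ∀ B, M.IsBase B → e ∈ B

def NoColoops (M : Matroid α) : Prop := ∀ e, ¬ Coloop M e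

/-- A matroid is simple if every pair of its elements is independent. -/
def Simple (M : Matroid α) : Prop :=
  ∀ e ∈ M.E, ∀ f ∈ M.E, M.Indep {e, f}

/-- A matroid is paving if every circuit has size at least the rank. -/
def Paving (M : Matroid α) : Prop :=
  ∀ C, Circuit M C → rank M ≤ C.ncard

/-- `M` is representable over the field `F`. -/
def Representable (M : Matroid α) (F : Type*) [Field F] : Prop :=
  ∃ (ι : Type) (v : α → ι → F),
    ∀ I, I ⊆ M.E → (M.Indep I ↔ LinearIndependent F (fun x : I => v x.1))

/-- `N` is the vector matroid, on ground set all of `η`, of the matrix whose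
column labelled by `c : η` is `A c`. -/
def IsVectorMatroidOn (F : Type*) [Field F] {η ι : Type*} (A : η → ι → F)
    (N : Matroid η) : Prop :=
  N.E = Set.univ ∧ ∀ I : Set η, (N.Indep I ↔ LinearIndependent F (fun x : I => A x.1))

/-- `φ` is an isomorphism from `M` to `N`. -/
def IsIsoTo (M : Matroid α) (N : Matroid β) (φ : α → β) : Prop :=
  Set.BijOn φ M.E N.E ∧ ∀ I, I ⊆ M.E → (M.Indep I ↔ N.Indep (φ '' I))

/-- The matrix `[I_r | D]` of the matroid `M_r`; the column `Sum.inl i` is the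
`i`-th standard basis vector, the column `Sum.inr 0` (the distinguished element `z`)
is the all-ones vector, and for `1 ≤ j ≤ r-1` the column `Sum.inr j` has ones
exactly in rows `0` and `j` (`0`-indexed). -/
def MrMatrix (r : ℕ) : (Fin r ⊕ Fin r) → Fin r → ZMod 2
  | Sum.inl i => fun k => if k = i then 1 else 0
  | Sum.inr j => fun k =>
      if j.val = 0 then 1 else if k.val = 0 ∨ k = j then 1 else 0

/-- The matrix `[I_r | D]` of the matroid `N_r`; the column `Sum.inr 0`
(the distinguished element `z`) is `(0,1,…,1)ᵀ`, and for `1 ≤ j ≤ r-2` the column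
`Sum.inr j` has ones exactly in rows `0`, `1` and `j+1` (`0`-indexed). -/
def NrMatrix (r : ℕ) : (Fin r ⊕ Fin (r - 1)) → Fin r → ZMod 2
  | Sum.inl i => fun k => if k = i then 1 else 0
  | Sum.inr j => fun k =>
      if j.val = 0 then (if k.val = 0 then 0 else 1)
      else if k.val = 0 ∨ k.val = 1 ∨ k.val = j.val + 1 then 1 else 0

/-- The matrix `[I_r | D]` of the matroid `L_r`; the columns of `D` are the all-ones
vector, `(1,1,0,…,0)ᵀ`, `(1,0,1,0,…,0)ᵀ` and `(0,1,1,0,…,0)ᵀ`. -/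
def LrMatrix (r : ℕ) : (Fin r ⊕ Fin 4) → Fin r → ZMod 2
  | Sum.inl i => fun k => if k = i then 1 else 0
  | Sum.inr j => fun k =>
      if j = 0 then 1
      else if j = 1 then (if k.val = 0 ∨ k.val = 1 then 1 else 0)
      else if j = 2 then (if k.val = 0 ∨ k.val = 2 then 1 else 0)
      else if k.val = 1 ∨ k.val = 2 then 1 else 0

/-- The matrix `[I_r | D]` of the matroid `J_r`; the columns of `D` are
`(0,1,1,…,1)ᵀ`, `(1,1,1,0,…,0)ᵀ`, `(1,1,0,1,0,…,0)ᵀ` and `(1,0,1,1,0,…,0)ᵀ`. -/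
def JrMatrix (r : ℕ) : (Fin r ⊕ Fin 4) → Fin r → ZMod 2
  | Sum.inl i => fun k => if k = i then 1 else 0
  | Sum.inr j => fun k =>
      if j = 0 then (if k.val = 0 then 0 else 1)
      else if j = 1 then (if k.val = 0 ∨ k.val = 1 ∨ k.val = 2 then 1 else 0)
      else if j = 2 then (if k.val = 0 ∨ k.val = 1 ∨ k.val = 3 then 1 else 0)
      else if k.val = 0 ∨ k.val = 2 ∨ k.val = 3 then 1 else 0

/-- A matrix over `GF(3)` whose vector matroid is `U_{2,4}`. -/
def U24Matrix : Fin 4 → Fin 2 → ZMod 3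
  | 0 => fun k => if k = 0 then 1 else 0
  | 1 => fun k => if k = 1 then 1 else 0
  | 2 => fun _ => 1
  | 3 => fun k => if k = 0 then 1 else 2

/-- A `GF(3)`-matrix representing the matroid obtained from a circuit
`{e, c_0, …, c_{n-1}}` (where `e` is the element `Sum.inl ()`) by 2-summing a copy
of `U_{2,4}` across each element `c_d` with `d ∈ D`.  For `d ∉ D` the element
`Sum.inr (d, 0)` is `c_d`, and for `d ∈ D` the elements `Sum.inr (d, j)`,
`j = 0, 1, 2`, are the three elements of the copy of `U_{2,4}` other than its
basepoint. -/
def thetaMatrix (n : ℕ) (D : Finset (Fin n)) :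
    (Unit ⊕ Fin n × Fin 3) → (Fin n ⊕ Fin n) → ZMod 3
  | Sum.inl _ => fun row => Sum.elim (fun _ => 1) (fun _ => 0) row
  | Sum.inr (d, j) => fun row =>
      let ed : (Fin n ⊕ Fin n) → ZMod 3 :=
        Sum.elim (fun i => if i = d then 1 else 0) (fun _ => 0)
      let wd : (Fin n ⊕ Fin n) → ZMod 3 :=
        Sum.elim (fun _ => 0) (fun i => if i = d then 1 else 0)
      if d ∈ D then
        (if j = 0 then wd row else if j = 1 then ed row + wd row else ed row - wd row)
      else ed row

/-- The ground set of the 2-sum construction: the circuit element `e`, the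
untouched circuit elements `c_d` for `d ∉ D`, and three `U_{2,4}`-elements for
each `d ∈ D`. -/
def thetaGround (n : ℕ) (D : Finset (Fin n)) : Set (Unit ⊕ Fin n × Fin 3) :=
  {x | ∀ d : Fin n, ∀ j : Fin 3, x = Sum.inr (d, j) → (j = 0 ∨ d ∈ D)}


def IsRepresentation (F : Type*) [Field F] {ι : Type*} (M : Matroid α) (v : α → ι → F) : Prop :=
  ∀ I ⊆ M.E, M.Indep I ↔ LinearIndepOn F v I

lemma circuit_iff_isCircuit {M : Matroid α} {C : Set α} : Circuit M C ↔ M.IsCircuit C :=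
  Matroid.isCircuit_iff.symm

theorem Loose.rank_le_ncard_add_one {M : Matroid α} {e : α} {X : Set α} (he : Loose M e)
    (hX : X.Finite) (hecl : e ∈ M.closure X) (heX : e ∉ X) : rank M ≤ X.ncard + 1 := by
  obtain ⟨I, hI⟩ := M.exists_isBasis' X
  have heI : e ∉ I := fun h => heX (hI.subset h)
  have hC := hI.indep.fundCircuit_isCircuit (hI.closure_eq_closure ▸ hecl) heI
  calc rank M ≤ (M.fundCircuit e I).ncard :=
        he.2 _ (circuit_iff_isCircuit.2 hC) (M.mem_fundCircuit e I)
    _ ≤ (insert e I).ncard :=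
        Set.ncard_le_ncard (M.fundCircuit_subset_insert e I) ((hX.subset hI.subset).insert e)
    _ ≤ I.ncard + 1 := Set.ncard_insert_le e I
    _ ≤ X.ncard + 1 := by grw [Set.ncard_le_ncard hI.subset hX]

theorem Pi.mem_span_image_single_one {R ι : Type*} [Semiring R] [Fintype ι] [DecidableEq ι]
    (w : ι → R) : w ∈ Submodule.span R ((fun i => Pi.single i (1 : R)) '' {i | w i ≠ 0}) := by
  classical
  have hw : ∑ i ∈ Finset.univ.filter (w · ≠ 0), w i • Pi.single i (1 : R) = w := by
    rw [Finset.sum_filter_of_ne (p := (w · ≠ 0)) fun i _ h h0 => h (by simp [h0])]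
    ext j
    simp [Pi.single_apply]
  have hmem : ∑ i ∈ Finset.univ.filter (w · ≠ 0), w i • Pi.single i (1 : R) ∈
      Submodule.span R ((fun i => Pi.single i (1 : R)) '' {i | w i ≠ 0}) :=
    Submodule.sum_mem _ fun i hi =>
      Submodule.smul_mem _ _ (Submodule.subset_span ⟨i, by simpa using hi, rfl⟩)
  rwa [hw] at hmem

section Representation

variable {F ι : Type*} [Field F] {M : Matroid α} {v : α → ι → F}

theorem IsRepresentation.mem_closure_iff (hv : IsRepresentation F M v) {I : Set α} {x : α}
    (hI : M.Indep I) (hx : x ∈ M.E) :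
    x ∈ M.closure I ↔ v x ∈ Submodule.span F (v '' I) := by
  rw [hI.mem_closure_iff', ((hv I hI.subset_ground).1 hI).mem_span_iff,
    hv _ (Set.insert_subset hx hI.subset_ground), and_iff_right hx]

theorem IsRepresentation.mem_closure_of_mem_span (hv : IsRepresentation F M v) {X : Set α}
    {x : α} (hX : X ⊆ M.E) (hx : x ∈ M.E) (hspan : v x ∈ Submodule.span F (v '' X)) :
    x ∈ M.closure X := by
  obtain ⟨I, hI⟩ := M.exists_isBasis X
  rw [← hI.closure_eq_closure, hv.mem_closure_iff hI.indep hx]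
  refine Submodule.span_le.2 ?_ hspan
  rintro _ ⟨y, hy, rfl⟩
  exact (hv.mem_closure_iff hI.indep (hX hy)).1 (hI.subset_closure hy)

theorem Loose.ncard_setOf_eq_le [Fintype ι] [DecidableEq ι] (hv : IsRepresentation F M v)
    {e : α} (he : Loose M e) (hrank : rank M = Fintype.card ι) {b : ι → α}
    (hbE : Set.range b ⊆ M.E) (heb : e ∉ Set.range b) (hstd : ∀ i, v (b i) = Pi.single i 1)
    {S : Finset α} (hSE : ↑S ⊆ M.E) (heS : e ∉ S) {w : ι → F}
    (hw : w ∈ Submodule.span F (v '' S)) : {i | w i = v e i}.ncard ≤ S.card + 1 := by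
  set Z := {i | w i ≠ v e i}
  set X := ↑S ∪ b '' Z
  have hdiff : w - v e ∈ Submodule.span F (v '' (b '' Z)) := by
    rw [Set.image_image]
    simp_rw [hstd]
    simpa [sub_ne_zero] using Pi.mem_span_image_single_one (w - v e)
  have hspan : v e ∈ Submodule.span F (v '' X) := by
    have hwX : w ∈ Submodule.span F (v '' X) :=
      Submodule.span_mono (Set.image_mono Set.subset_union_left) hw
    have hdiffX : w - v e ∈ Submodule.span F (v '' X) :=
      Submodule.span_mono (Set.image_mono Set.subset_union_right) hdiff
    simpa using Submodule.sub_mem _ hwX hdiffX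
  have hXE : X ⊆ M.E := Set.union_subset hSE ((Set.image_subset_range _ _).trans hbE)
  have heX : e ∉ X := by
    rintro (h | ⟨i, -, rfl⟩)
    exacts [heS h, heb ⟨i, rfl⟩]
  have hr : rank M ≤ X.ncard + 1 :=
    he.rank_le_ncard_add_one (S.finite_toSet.union (Z.toFinite.image b))
      (hv.mem_closure_of_mem_span hXE he.1 hspan) heX
  have hX : X.ncard ≤ S.card + Z.ncard := by
    grw [Set.ncard_union_le, Set.ncard_coe_finset, Set.ncard_image_le Z.toFinite]
  have hcompl : Z.ncard + {i | w i = v e i}.ncard = Fintype.card ι := by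
    rw [← Nat.card_eq_fintype_card, ← Set.ncard_add_ncard_compl Z]
    congr 2
    ext i
    simp [Z]
  omega

end Representation

/-- Sublemma 3.2.1: in the ternary representation setup, a
`{1, -1}`-linear combination `j` of `k` distinct columns of `Q` other than `e^P`
has, for each sign, at most `k + 1` entries of that sign after deleting the first
entry; and if the first entry of `j` is zero, then `j` itself has at most `k`
entries of each sign. -/
theorem ternary_setup_combination {α : Type*} (r : ℕ) (hr : 5 ≤ r) (M : Matroid α)
    (e : α) (hloose : Loose M e) (hrank : rank M = r)
    (v : α → Fin r → ZMod 3)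
    (hrep : ∀ I, I ⊆ M.E →
      (M.Indep I ↔ LinearIndependent (ZMod 3) (fun x : I => v x.1)))
    (b : Fin r → α)
    (hbase : M.IsBase (Set.range b)) (heb : e ∉ Set.range b)
    (hstd : ∀ i j : Fin r, v (b i) j = if j = i then 1 else 0)
    (he0 : v e ⟨0, by omega⟩ = 0)
    (he1 : ∀ i : Fin r, i ≠ ⟨0, by omega⟩ → v e i = 1)
    (k : ℕ) (S : Finset α) (hScard : S.card = k)
    (hSE : ↑S ⊆ M.E) (hSe : e ∉ S)
    (c : α → ZMod 3)
    (j : Fin r → ZMod 3) (hj : j = ∑ f ∈ S, c f • v f) :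
    ∀ s : ZMod 3, s = 1 ∨ s = -1 →
      ({i : Fin r | i ≠ ⟨0, by omega⟩ ∧ j i = s}.ncard ≤ k + 1 ∧
        (j ⟨0, by omega⟩ = 0 → {i : Fin r | j i = s}.ncard ≤ k)) := by
  intro s hs
  set i₀ : Fin r := ⟨0, by omega⟩
  have hss : s * s = 1 := by rcases hs with rfl | rfl <;> decide
  have hs0 : s ≠ 0 := by rcases hs with rfl | rfl <;> decide
  have hsj : s • j ∈ Submodule.span (ZMod 3) (v '' S) := hj ▸ Submodule.smul_mem _ _
    (Submodule.sum_mem _ fun f hf => Submodule.smul_mem _ _ (Submodule.subset_span ⟨f, hf, rfl⟩))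
  have hagree := hloose.ncard_setOf_eq_le hrep (by rw [hrank, Fintype.card_fin])
    hbase.subset_ground heb (fun i => funext fun t => by simp [hstd, Pi.single_apply]) hSE hSe hsj
  have hsign : ∀ i, i ≠ i₀ → j i = s → (s • j) i = v e i := by
    intro i hi hji
    simp [hji, hss, he1 i hi]
  refine ⟨?_, fun hj0 => ?_⟩
  · grw [← hScard, ← hagree]
    exact Set.ncard_le_ncard fun i hi => hsign i hi.1 hi.2
  · have hi₀ : i₀ ∉ {i | j i = s} := fun h => hs0 (h.symm.trans hj0)
    have hsub : insert i₀ {i | j i = s} ⊆ {i | (s • j) i = v e i} :=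
      Set.insert_subset (by simp [hj0, he0, i₀])
        fun i hi => hsign i (ne_of_mem_of_not_mem hi hi₀) hi
    have hcard := Set.ncard_le_ncard hsub
    rw [Set.ncard_insert_of_notMem hi₀] at hcard
    omega

end LoosePaper
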